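/- arXiv:math/0403337 — 2 statements merged into one kernel-verified Lean document; each statement's English description precedes it below -/
import Mathlib

section
/- Let M and M′ be loopless finite matroids on the same ground set E. Suppose that a subset F ⊆ E is a nontrivial connected flat of M if and only if it is a nontrivial connected flat of M′, and that r_M(F) = r_{M′}(F) for every such flat F. Then M and M′ have exactly the same circuits, and hence M = M′. -/
open Set
open scoped Matroid

namespace LPM

variable {α β : Type*}

/-- `I` is a partial transversal of the set family `N`: there is an injection
matching each element of `I` to an index of a member of the family containing it. -/
def IsPT {ι : Type*} (N : ι → Set α) (I : Set α) : Prop :=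
  ∃ f : I → ι, Function.Injective f ∧ ∀ x : I, (x : α) ∈ N (f x)

/-- `I` is a (full) transversal of the set family `N`: there is a bijection
matching each element of `I` to an index of a member of the family containing it. -/
def IsT {ι : Type*} (N : ι → Set α) (I : Set α) : Prop :=
  ∃ f : I → ι, Function.Bijective f ∧ ∀ x : I, (x : α) ∈ N (f x)

/-- A lattice path presentation with nullity `m` and rank `r`: a sequence of
intervals `[l i, g i] ⊆ {1, …, m + r}` whose left endpoints strictly increase
and whose right endpoints strictly increase. -/
structure LPP (m r : ℕ) where
  l : Fin r → ℕ
  g : Fin r → ℕ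
  l_strictMono : StrictMono l
  g_strictMono : StrictMono g
  one_le_l : ∀ i, 1 ≤ l i
  l_le_g : ∀ i, l i ≤ g i
  g_le : ∀ i, g i ≤ m + r

/-- The intervals of a lattice path presentation. -/
def LPP.N {m r : ℕ} (P : LPP m r) (i : Fin r) : Set ℕ := Set.Icc (P.l i) (P.g i)

/-- `M` is the lattice path matroid `M[N]` of the presentation `P`: the ground set
is `{1, …, m + r}` and the independent sets are exactly the partial transversals
of the intervals of `P`. -/
def IsLPMOf {m r : ℕ} (P : LPP m r) (M : Matroid ℕ) : Prop :=
  M.E = Set.Icc 1 (m + r) ∧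
    ∀ I : Set ℕ, M.Indep I ↔ I ⊆ Set.Icc 1 (m + r) ∧ IsPT P.N I

/-- `M` is isomorphic to `M'`: there is a bijection between the ground sets
carrying independent sets to independent sets in both directions. -/
def IsoTo (M : Matroid α) (M' : Matroid β) : Prop :=
  ∃ f : α → β, Set.BijOn f M.E M'.E ∧ ∀ I ⊆ M.E, (M.Indep I ↔ M'.Indep (f '' I))

/-- A lattice path matroid: a matroid isomorphic to `M[N]` for some lattice path
presentation (presentations with `r = 0` give the rank-zero matroids). -/
def IsLPMatroid (M : Matroid α) : Prop :=
  ∃ (m r : ℕ) (P : LPP m r) (M₀ : Matroid ℕ), IsLPMOf P M₀ ∧ IsoTo M M₀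

/-- A circuit of a matroid: a minimal dependent subset of the ground set. -/
def Circuit (M : Matroid α) (C : Set α) : Prop :=
  C ⊆ M.E ∧ ¬ M.Indep C ∧ ∀ D : Set α, D ⊂ C → M.Indep D

/-- A matroid is connected if every two distinct elements of the ground set lie
in a common circuit. -/
def Connected (M : Matroid α) : Prop :=
  ∀ x ∈ M.E, ∀ y ∈ M.E, x ≠ y → ∃ C, Circuit M C ∧ x ∈ C ∧ y ∈ C

/-- The rank of a set in a matroid: the supremum of the cardinalities of its
independent subsets. -/
noncomputable def rk (M : Matroid α) (X : Set α) : ℕ :=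
  sSup {n | ∃ I, I ⊆ X ∧ M.Indep I ∧ I.ncard = n}

/-- A nontrivial connected flat: a flat that is dependent and whose restriction
is a connected matroid. -/
def NTConnFlat (M : Matroid α) (X : Set α) : Prop :=
  M.IsFlat X ∧ ¬ M.Indep X ∧ Connected (M ↾ X)

/-- Deletion of a set from a matroid. -/
def delete (M : Matroid α) (D : Set α) : Matroid α := M ↾ (M.E \ D)

/-- Contraction of a set in a matroid, defined via duality. -/
def contract (M : Matroid α) (C : Set α) : Matroid α := (delete M✶ C)✶

/-- `Minor M' M` means that `M'` is obtained from `M` by a sequence of deletions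
and contractions. -/
inductive Minor : Matroid α → Matroid α → Prop
  | refl (M : Matroid α) : Minor M M
  | del {M' M : Matroid α} (D : Set α) (h : Minor M' M) : Minor (delete M' D) M
  | con {M' M : Matroid α} (C : Set α) (h : Minor M' M) : Minor (contract M' C) M

end LPM

/-!
A dependent set `I` contains a circuit `C`, and in a loopless matroid `cl C` is a nontrivial
connected flat: each `x ∈ cl C` lies on a circuit inside `C ∪ {x}` that meets `C`, and two
circuits that meet can be merged into one through any prescribed element of each (Oxley,
Prop. 4.1.2). As `r(cl C) = |C| - 1 < |I ∩ cl C|`, a set is independent exactly when it meets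
every nontrivial connected flat `F` in at most `r(F)` elements, so the nontrivial connected flats
and their ranks determine the independent sets.
-/

section

variable {α : Type*} {M : Matroid α} {C C₁ C₂ I : Set α} {e x y : α}

namespace Matroid

lemma IsCircuit.strong_elimination_inter_sdiff_nonempty (h₁ : M.IsCircuit C₁)
    (h₂ : M.IsCircuit C₂) (he₁ : e ∈ C₁) (he₂ : e ∈ C₂) (hx₁ : x ∈ C₁) (hx₂ : x ∉ C₂) :
    ∃ C ⊆ (C₁ ∪ C₂) \ {e}, M.IsCircuit C ∧ x ∈ C ∧ (C ∩ (C₂ \ C₁)).Nonempty := by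
  obtain ⟨C, hCs, hC, hxC⟩ := h₁.strong_elimination h₂ he₁ he₂ hx₁ hx₂
  refine ⟨C, hCs, hC, hxC, ?_⟩
  by_contra hdisj
  have hCC₁ : C ⊆ C₁ := fun z hz ↦ by
    by_contra hz₁
    exact hdisj ⟨z, hz, (hCs hz).1.resolve_left hz₁, hz₁⟩
  exact (hCs (hC.eq_of_subset_isCircuit h₁ hCC₁ ▸ he₁)).2 rfl

lemma IsCircuit.exists_isCircuit_subset_union [M.Finitary] (h₁ : M.IsCircuit C₁)
    (h₂ : M.IsCircuit C₂) (hne : (C₁ ∩ C₂).Nonempty) (hx : x ∈ C₁) (hy : y ∈ C₂) :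
    ∃ C ⊆ C₁ ∪ C₂, M.IsCircuit C ∧ x ∈ C ∧ y ∈ C := by
  induction hn : (C₁ ∪ C₂).ncard using Nat.strong_induction_on generalizing C₁ C₂ x y with
  | _ n ih =>
  have ih_ssubset : ∀ {D₁ D₂ : Set α}, M.IsCircuit D₁ → M.IsCircuit D₂ → (D₁ ∩ D₂).Nonempty →
      D₁ ∪ D₂ ⊂ C₁ ∪ C₂ → x ∈ D₁ → y ∈ D₂ → ∃ C ⊆ C₁ ∪ C₂, M.IsCircuit C ∧ x ∈ C ∧ y ∈ C :=
    fun hD₁ hD₂ hDne hss hxD hyD ↦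
      have hlt := hn ▸ ncard_lt_ncard hss (h₁.finite.union h₂.finite)
      let ⟨C, hCs, hC⟩ := ih _ hlt hD₁ hD₂ hDne hxD hyD rfl
      ⟨C, hCs.trans hss.subset, hC⟩
  by_cases hyC₁ : y ∈ C₁
  · exact ⟨C₁, subset_union_left, h₁, hx, hyC₁⟩
  by_cases hxC₂ : x ∈ C₂
  · exact ⟨C₂, subset_union_right, h₂, hxC₂, hy⟩
  obtain ⟨e, he₁, he₂⟩ := hne
  obtain ⟨C₃, hC₃s, h₃, hxC₃, f, hfC₃, hfC₂, hfC₁⟩ :=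
    h₁.strong_elimination_inter_sdiff_nonempty h₂ he₁ he₂ hx hxC₂
  obtain ⟨C₄, hC₄s, h₄, hyC₄, g, hgC₄, hgC₁, -⟩ :=
    h₂.strong_elimination_inter_sdiff_nonempty h₁ he₂ he₁ hy hyC₁
  rw [union_comm] at hC₄s
  have hC₃ : C₃ ⊆ C₁ ∪ C₂ := hC₃s.trans sdiff_subset
  have hC₄ : C₄ ⊆ C₁ ∪ C₂ := hC₄s.trans sdiff_subset
  by_cases h32 : C₃ ∪ C₂ = C₁ ∪ C₂
  swap
  · exact ih_ssubset h₃ h₂ ⟨f, hfC₃, hfC₂⟩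
      ((union_subset hC₃ subset_union_right).ssubset_of_ne h32) hxC₃ hy
  by_cases h14 : C₁ ∪ C₄ = C₁ ∪ C₂
  swap
  · exact ih_ssubset h₁ h₄ ⟨g, hgC₁, hgC₄⟩
      ((union_subset subset_union_left hC₄).ssubset_of_ne h14) hx hyC₄
  -- Otherwise `C₄ ⊇ C₂ \ C₁ ∋ f`, and `C₃ ∪ C₄` misses `e`.
  have hfC₄ : f ∈ C₄ := (h14 ▸ mem_union_right C₁ hfC₂ : f ∈ C₁ ∪ C₄).resolve_left hfC₁
  refine ih_ssubset h₃ h₄ ⟨f, hfC₃, hfC₄⟩ ?_ hxC₃ hyC₄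
  exact ssubset_of_subset_of_ssubset (union_subset hC₃s hC₄s)
    (sdiff_singleton_ssubset.2 (mem_union_left _ he₁))

lemma IsCircuit.exists_isCircuit_inter_nonempty_of_mem_closure [M.Loopless]
    (hC : M.IsCircuit C) (hx : x ∈ M.closure C) :
    ∃ D ⊆ insert x C, M.IsCircuit D ∧ x ∈ D ∧ (D ∩ C).Nonempty := by
  by_cases hxC : x ∈ C
  · exact ⟨C, subset_insert x C, hC, hxC, by simpa using hC.nonempty⟩
  obtain ⟨D, hDs, hD, hxD⟩ := exists_isCircuit_of_mem_closure hx hxC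
  refine ⟨D, hDs, hD, hxD, ?_⟩
  obtain ⟨z, hzD, hzx⟩ := (loopless_iff_forall_isCircuit.1 ‹_› D hD).exists_ne x
  exact ⟨z, hzD, (hDs hzD).resolve_left hzx⟩

lemma IsCircuit.exists_isCircuit_subset_closure [M.Finitary] [M.Loopless] (hC : M.IsCircuit C)
    (hx : x ∈ M.closure C) (hy : y ∈ M.closure C) :
    ∃ D ⊆ M.closure C, M.IsCircuit D ∧ x ∈ D ∧ y ∈ D := by
  have hCcl : C ⊆ M.closure C := M.subset_closure C
  obtain ⟨Dx, hDxs, hDx, hxDx, hDxC⟩ := hC.exists_isCircuit_inter_nonempty_of_mem_closure hx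
  obtain ⟨Dy, hDys, hDy, hyDy, c, hcDy, hcC⟩ :=
    hC.exists_isCircuit_inter_nonempty_of_mem_closure hy
  obtain ⟨D', hD's, hD', hxD', hcD'⟩ := hDx.exists_isCircuit_subset_union hC
    (inter_comm Dx C ▸ hDxC) hxDx hcC
  obtain ⟨D, hDs, hD, hxD, hyD⟩ := hD'.exists_isCircuit_subset_union hDy ⟨c, hcD', hcDy⟩ hxD' hyDy
  have hDxcl : Dx ⊆ M.closure C := hDxs.trans (insert_subset hx hCcl)
  have hDycl : Dy ⊆ M.closure C := hDys.trans (insert_subset hy hCcl)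
  exact ⟨D, hDs.trans (union_subset (hD's.trans (union_subset hDxcl hCcl)) hDycl), hD, hxD, hyD⟩

end Matroid

namespace LPM

open Matroid

lemma loopless_of_forall_indep_singleton (h : ∀ e ∈ M.E, M.Indep {e}) : M.Loopless :=
  loopless_iff_forall_isNonloop.2 fun e he ↦ indep_singleton.1 (h e he)

lemma circuit_iff_isCircuit : Circuit M C ↔ M.IsCircuit C := by
  rw [isCircuit_iff_forall_ssubset, Dep, Circuit]
  tauto

lemma cast_rk [M.Finite] (X : Set α) : (rk M X : ℕ∞) = M.eRk X := by
  obtain ⟨I, hI⟩ := M.exists_isBasis' X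
  have hIfin : I.Finite := M.ground_finite.subset hI.indep.subset_ground
  suffices rk M X = I.ncard by rw [this, hIfin.cast_ncard_eq, hI.encard_eq_eRk]
  refine IsGreatest.csSup_eq ⟨⟨I, hI.subset, hI.indep, rfl⟩, ?_⟩
  rintro _ ⟨J, hJX, hJ, rfl⟩
  have hJfin : J.Finite := M.ground_finite.subset hJ.subset_ground
  rw [← Nat.cast_le (α := ℕ∞), hJfin.cast_ncard_eq, hIfin.cast_ncard_eq, hI.encard_eq_eRk]
  exact hJ.encard_le_eRk_of_subset hJX

lemma _root_.Matroid.IsCircuit.ntConnFlat_closure [M.Finitary] [M.Loopless]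
    (hC : M.IsCircuit C) : NTConnFlat M (M.closure C) := by
  refine ⟨M.isFlat_closure C, fun h ↦ hC.not_indep (h.subset (M.subset_closure C)), ?_⟩
  intro x hx y hy _
  obtain ⟨D, hDs, hD, hxD, hyD⟩ := hC.exists_isCircuit_subset_closure hx hy
  refine ⟨D, circuit_iff_isCircuit.2 ?_, hxD, hyD⟩
  exact (restrict_isCircuit_iff (M.closure_subset_ground C)).2 ⟨hD, hDs⟩

lemma indep_iff_forall_ntConnFlat [M.Finite] [M.Loopless] :
    M.Indep I ↔ I ⊆ M.E ∧ ∀ F, NTConnFlat M F → (I ∩ F).ncard ≤ rk M F := by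
  refine ⟨fun hI ↦ ⟨hI.subset_ground, fun F _ ↦ ?_⟩, fun ⟨hIE, hI⟩ ↦ ?_⟩
  · have hfin : (I ∩ F).Finite := M.ground_finite.subset (inter_subset_left.trans hI.subset_ground)
    rw [← Nat.cast_le (α := ℕ∞), hfin.cast_ncard_eq, cast_rk]
    exact (hI.subset inter_subset_left).encard_le_eRk_of_subset inter_subset_right
  by_contra hdep
  obtain ⟨C, hCI, hC⟩ := (M.not_indep_iff.1 hdep).exists_isCircuit_subset
  have hfin : (I ∩ M.closure C).Finite := M.ground_finite.subset (inter_subset_left.trans hIE)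
  have hle := hI _ hC.ntConnFlat_closure
  rw [← Nat.cast_le (α := ℕ∞), hfin.cast_ncard_eq, cast_rk, eRk_closure_eq] at hle
  -- `r(C) + 1 = |C| ≤ |I ∩ cl C| ≤ r(cl C) = r(C)`, and `r(C)` is finite.
  have hCle : C.encard ≤ (I ∩ M.closure C).encard :=
    encard_le_encard (subset_inter hCI (M.subset_closure C))
  have htop : M.eRk C ≠ ⊤ := (M.isRkFinite_set C).eRk_lt_top.ne
  rw [← hC.eRk_add_one_eq] at hCle
  exact ENat.add_one_le_iff htop |>.1 (hCle.trans hle) |>.false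

end LPM

end

open LPM in
/-- Two loopless finite matroids on the same ground set having
the same nontrivial connected flats, with the same ranks, have the same
circuits, and hence are equal. -/
theorem stmt4 {α : Type*} (M M' : Matroid α) (hE : M.E = M'.E) (hfin : M.E.Finite)
    (hloop : ∀ e ∈ M.E, M.Indep {e}) (hloop' : ∀ e ∈ M'.E, M'.Indep {e})
    (hflats : ∀ F : Set α, NTConnFlat M F ↔ NTConnFlat M' F)
    (hranks : ∀ F : Set α, NTConnFlat M F → rk M F = rk M' F) :
    (∀ C : Set α, Circuit M C ↔ Circuit M' C) ∧ M = M' := by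
  have : M.Finite := ⟨hfin⟩
  have : M'.Finite := ⟨hE ▸ hfin⟩
  have := loopless_of_forall_indep_singleton hloop
  have := loopless_of_forall_indep_singleton hloop'
  have hbound : ∀ I F, (NTConnFlat M F → (I ∩ F).ncard ≤ rk M F) ↔
      (NTConnFlat M' F → (I ∩ F).ncard ≤ rk M' F) := fun I F ↦ by
    by_cases hF : NTConnFlat M F
    · simp only [hF, (hflats F).1 hF, hranks F hF]
    · simp only [hF, mt (hflats F).2 hF, false_imp_iff]
  obtain rfl : M = M' := Matroid.ext_indep hE fun I _ ↦ by
    rw [indep_iff_forall_ntConnFlat, indep_iff_forall_ntConnFlat, hE]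
    exact and_congr_right fun _ ↦ forall_congr' (hbound I)
  exact ⟨fun _ ↦ Iff.rfl, rfl⟩
end

section
/- Let m ≥ 1 and r ≥ 1 and let (N_1,…,N_r) be a lattice path presentation such that M[N] is a connected matroid. An element x ∈ {1,…,m+r} lies in some spanning circuit of M[N] if and only if x belongs to at least two of the sets N_1,…,N_r, or x ∈ N_1, or x ∈ N_r. -/
open Set
open scoped Matroid

/-!
Bases of `M[N]` are the `r`-sets whose `i`-th smallest element lies in `N i`. Deleting any
element of a spanning circuit `c 0 < ⋯ < c r` leaves a basis, so `c i` and `c (i + 1)` lie in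
`N i`: each element of a spanning circuit lies in `N (k - 1) ∩ N k`, or in an end interval.
Conversely, connectivity forces consecutive intervals to overlap (`l (i + 1) ≤ g i`), and
then `l 0 < ⋯ < l (p - 1) < x < g p < ⋯ < g (r - 1)` is such a chain through `x` for a
suitable position `p` whenever `x` lies in two intervals or in an end interval.
-/

namespace LPM

section Transversal

variable {α ι : Type*} {N : ι → Set α} {I J : Set α}

theorem IsPT.ncard_le [Finite ι] (h : IsPT N I) : I.ncard ≤ Nat.card ι := by
  obtain ⟨f, hf, -⟩ := h
  rw [← Nat.card_coe_set_eq]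
  exact Nat.card_le_card_of_injective f hf

theorem isPT_range {e : ι → α} (he : Function.Injective e) (h : ∀ i, e i ∈ N i) :
    IsPT N (Set.range e) :=
  ⟨(Equiv.ofInjective e he).symm, (Equiv.ofInjective e he).symm.injective, fun x => by
    simpa only [Equiv.apply_ofInjective_symm] using h ((Equiv.ofInjective e he).symm x)⟩

theorem IsPT.union (hI : IsPT N I) (hJ : IsPT N J)
    (hsep : ∀ x ∈ I, ∀ y ∈ J, ∀ k, x ∈ N k → y ∉ N k) : IsPT N (I ∪ J) := by
  classical
  obtain ⟨f, hf, hfN⟩ := hI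
  obtain ⟨g, hg, hgN⟩ := hJ
  have hJ_of_notMem (x : ↥(I ∪ J)) (hx : (x : α) ∉ I) : (x : α) ∈ J := x.2.resolve_left hx
  let F : ↥(I ∪ J) → ι := fun x =>
    if hx : (x : α) ∈ I then f ⟨x, hx⟩ else g ⟨x, hJ_of_notMem x hx⟩
  have hFN (x : ↥(I ∪ J)) : (x : α) ∈ N (F x) := by
    by_cases hx : (x : α) ∈ I
    · simpa only [F, dif_pos hx] using hfN ⟨x, hx⟩
    · simpa only [F, dif_neg hx] using hgN ⟨x, hJ_of_notMem x hx⟩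
  refine ⟨F, fun x y hxy => ?_, hFN⟩
  by_cases hx : (x : α) ∈ I <;> by_cases hy : (y : α) ∈ I
  · simp only [F, dif_pos hx, dif_pos hy] at hxy
    exact Subtype.ext (congrArg Subtype.val (hf hxy) :)
  · exact (hsep x hx y (hJ_of_notMem y hy) _ (hFN x) (hxy ▸ hFN y)).elim
  · exact (hsep y hy x (hJ_of_notMem x hx) _ (hFN y) (hxy ▸ hFN x)).elim
  · simp only [F, dif_neg hx, dif_neg hy] at hxy
    exact Subtype.ext (congrArg Subtype.val (hg hxy) :)

end Transversal

section Rank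

variable {α : Type*} {M : Matroid α} {X I : Set α}

theorem bddAbove_ncard_indep (hX : X.Finite) :
    BddAbove {n | ∃ I, I ⊆ X ∧ M.Indep I ∧ I.ncard = n} :=
  ⟨X.ncard, by rintro _ ⟨I, hIX, -, rfl⟩; exact Set.ncard_le_ncard hIX hX⟩

theorem ncard_le_rk (hX : X.Finite) (hIX : I ⊆ X) (hI : M.Indep I) : I.ncard ≤ rk M X :=
  le_csSup (bddAbove_ncard_indep hX) ⟨I, hIX, hI, rfl⟩

theorem exists_indep_ncard_eq_rk (hX : X.Finite) :
    ∃ I, I ⊆ X ∧ M.Indep I ∧ I.ncard = rk M X :=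
  Nat.sSup_mem (s := {n | ∃ I, I ⊆ X ∧ M.Indep I ∧ I.ncard = n})
    ⟨0, ∅, Set.empty_subset X, M.empty_indep, Set.ncard_empty α⟩ (bddAbove_ncard_indep hX)

end Rank

theorem le_of_comp_le_of_injective {ι β : Type*} [LinearOrder ι] [Fintype ι] [LinearOrder β]
    {a b : ι → β} {F : ι → ι} (ha : Monotone a) (hb : Monotone b)
    (hF : Function.Injective F)
    (h : ∀ k, b (F k) ≤ a k) (i : ι) : b i ≤ a i := by
  classical
  -- otherwise `F` maps `{k ≤ i}` injectively into the smaller set `{k < i}`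
  by_contra! hi
  have hmaps : Set.MapsTo F (Finset.univ.filter (· ≤ i)) (Finset.univ.filter (· < i)) := by
    intro k hk
    simp only [Finset.coe_filter, Finset.mem_univ, true_and, Set.mem_ofPred_eq] at hk ⊢
    by_contra! hik
    exact (h k).not_gt ((ha hk).trans_lt (hi.trans_le (hb hik)))
  have hle := Finset.card_le_card_of_injOn F hmaps hF.injOn
  have hlt : (Finset.univ.filter (· < i)).card < (Finset.univ.filter (· ≤ i)).card :=
    Finset.card_lt_card <| (Finset.ssubset_iff_of_subset (Finset.monotone_filter_right _
      fun _ _ => le_of_lt)).2 ⟨i, by simp, by simp⟩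
  omega

variable {m r : ℕ} {P : LPP m r} {M : Matroid ℕ}

theorem LPP.l_mem_N (P : LPP m r) (i : Fin r) : P.l i ∈ P.N i := ⟨le_rfl, P.l_le_g i⟩

theorem LPP.g_mem_N (P : LPP m r) (i : Fin r) : P.g i ∈ P.N i := ⟨P.l_le_g i, le_rfl⟩

theorem LPP.N_subset (P : LPP m r) (i : Fin r) : P.N i ⊆ Set.Icc 1 (m + r) :=
  Set.Icc_subset_Icc (P.one_le_l i) (P.g_le i)

theorem LPP.mem_N_of_isPT_range (P : LPP m r) {e : Fin r → ℕ} (he : StrictMono e)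
    (hPT : IsPT P.N (Set.range e)) (i : Fin r) : e i ∈ P.N i := by
  obtain ⟨f, hf, hfN⟩ := hPT
  let F : Fin r → Fin r := fun k => f ⟨e k, Set.mem_range_self k⟩
  have hF : Function.Injective F := fun a b hab =>
    he.injective (congrArg Subtype.val (hf hab) :)
  refine ⟨le_of_comp_le_of_injective he.monotone P.l_strictMono.monotone hF
    (fun k => (hfN ⟨e k, Set.mem_range_self k⟩).1) i, ?_⟩
  exact le_of_comp_le_of_injective (ι := (Fin r)ᵒᵈ) (β := ℕᵒᵈ) he.monotone.dual
    P.g_strictMono.monotone.dual hF (fun k => (hfN ⟨e k, Set.mem_range_self k⟩).2) i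

theorem IsLPMOf.ncard_le (hM : IsLPMOf P M) {I : Set ℕ} (hI : M.Indep I) : I.ncard ≤ r := by
  simpa using ((hM.2 I).1 hI).2.ncard_le

theorem IsLPMOf.rk_eq (hM : IsLPMOf P M) {X I : Set ℕ} (hX : X.Finite) (hIX : I ⊆ X)
    (hI : M.Indep I) (hIr : I.ncard = r) : rk M X = r := by
  obtain ⟨J, -, hJ, hJX⟩ := exists_indep_ncard_eq_rk (M := M) hX
  exact le_antisymm (hJX ▸ hM.ncard_le hJ) (hIr ▸ ncard_le_rk hX hIX hI)

theorem IsLPMOf.rk_ground (hM : IsLPMOf P M) : rk M M.E = r := by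
  have hl : M.Indep (Set.range P.l) := by
    rw [hM.2]
    exact ⟨Set.range_subset_iff.2 fun i => P.N_subset i (P.l_mem_N i),
      isPT_range P.l_strictMono.injective P.l_mem_N⟩
  refine hM.rk_eq (hM.1 ▸ Set.finite_Icc 1 (m + r)) hl.subset_ground hl ?_
  simp [Set.ncard_range_of_injective P.l_strictMono.injective]

-- The spanning circuits of `M[N]` are exactly the ranges of chains.
def IsChain (P : LPP m r) (c : Fin (r + 1) → ℕ) : Prop :=
  ∀ i : Fin r, c i.castSucc < c i.succ ∧ c i.castSucc ∈ P.N i ∧ c i.succ ∈ P.N i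

namespace IsChain

variable {c : Fin (r + 1) → ℕ}

theorem strictMono (hc : IsChain P c) : StrictMono c :=
  Fin.strictMono_iff_lt_succ.2 fun i => (hc i).1

theorem mem_N_succAbove (hc : IsChain P c) (j : Fin (r + 1)) (i : Fin r) :
    c (j.succAbove i) ∈ P.N i := by
  rcases lt_or_ge i.castSucc j with h | h
  · rw [Fin.succAbove_of_castSucc_lt j i h]; exact (hc i).2.1
  · rw [Fin.succAbove_of_le_castSucc j i h]; exact (hc i).2.2

theorem indep_range_succAbove (hM : IsLPMOf P M) (hc : IsChain P c) (j : Fin (r + 1)) :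
    M.Indep (Set.range (c ∘ j.succAbove)) := by
  rw [hM.2]
  exact ⟨Set.range_subset_iff.2 fun i => P.N_subset i (hc.mem_N_succAbove j i),
    isPT_range (hc.strictMono.injective.comp Fin.succAbove_right_injective)
      (hc.mem_N_succAbove j)⟩

theorem circuit (hM : IsLPMOf P M) (hr : 0 < r) (hc : IsChain P c) :
    Circuit M (Set.range c) := by
  have hsucc (k j : Fin (r + 1)) (hkj : k ≠ j) : c k ∈ Set.range (c ∘ j.succAbove) := by
    obtain ⟨i, rfl⟩ := Fin.exists_succAbove_eq hkj
    exact ⟨i, rfl⟩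
  refine ⟨?_, fun hind => ?_, fun D hD => ?_⟩
  · rintro _ ⟨k, rfl⟩
    have : Nontrivial (Fin (r + 1)) := Fin.nontrivial_iff_two_le.2 (by omega)
    obtain ⟨j, hj⟩ := exists_ne k
    exact (hc.indep_range_succAbove hM j).subset_ground (hsucc k j hj.symm)
  · have := hM.ncard_le hind
    rw [Set.ncard_range_of_injective hc.strictMono.injective, Nat.card_fin] at this
    omega
  · obtain ⟨_, ⟨j, rfl⟩, hjD⟩ := Set.exists_of_ssubset hD
    refine (hc.indep_range_succAbove hM j).subset fun z hz => ?_
    obtain ⟨k, rfl⟩ := hD.subset hz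
    exact hsucc k j (by rintro rfl; exact hjD hz)

theorem rk_range (hM : IsLPMOf P M) (hc : IsChain P c) : rk M (Set.range c) = r := by
  refine hM.rk_eq (Set.finite_range c) (Set.range_comp_subset_range _ _)
    (hc.indep_range_succAbove hM (Fin.last r)) ?_
  rw [Set.ncard_range_of_injective (hc.strictMono.injective.comp Fin.succAbove_right_injective),
    Nat.card_fin]

theorem mem_N_two_or_mem_N_ends (hr : 0 < r) (hc : IsChain P c) (k : Fin (r + 1)) :
    (∃ i j : Fin r, i ≠ j ∧ c k ∈ P.N i ∧ c k ∈ P.N j) ∨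
      c k ∈ P.N ⟨0, hr⟩ ∨ c k ∈ P.N ⟨r - 1, by omega⟩ := by
  induction k using Fin.cases with
  | zero => exact Or.inr (Or.inl (hc ⟨0, hr⟩).2.1)
  | succ i =>
    by_cases hi : i.val + 1 < r
    · have hsucc : (⟨i.val + 1, hi⟩ : Fin r).castSucc = i.succ := Fin.ext (by simp)
      refine Or.inl ⟨i, ⟨i.val + 1, hi⟩, fun h => ?_, (hc i).2.2, hsucc ▸ (hc _).2.1⟩
      simp [Fin.ext_iff] at h
    · obtain rfl : i = ⟨r - 1, Nat.sub_one_lt_of_lt hr⟩ :=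
        Fin.ext (show i.val = r - 1 by omega)
      exact Or.inr (Or.inr (hc _).2.2)

end IsChain

theorem IsLPMOf.exists_isChain_of_circuit (hM : IsLPMOf P M) {C : Set ℕ} (hC : Circuit M C)
    (hrk : rk M C = r) : ∃ c, IsChain P c ∧ Set.range c = C := by
  have hfin : C.Finite := (hM.1 ▸ Set.finite_Icc 1 (m + r)).subset hC.1
  obtain ⟨I, hIC, hI, hIr⟩ := exists_indep_ncard_eq_rk (M := M) hfin
  have hlt : r < C.ncard := hrk ▸ hIr ▸
    Set.ncard_lt_ncard (hIC.ssubset_of_ne (by rintro rfl; exact hC.2.1 hI)) hfin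
  obtain ⟨y, hy⟩ : C.Nonempty := Set.nonempty_of_ncard_ne_zero (by omega)
  have hle : C.ncard - 1 ≤ r := by
    rw [← Set.ncard_sdiff_singleton_of_mem hy]
    exact hM.ncard_le (hC.2.2 _ (Set.sdiff_singleton_ssubset.2 hy))
  have hcard : hfin.toFinset.card = r + 1 := by
    rw [← Set.ncard_eq_toFinset_card C hfin]; omega
  set c := hfin.toFinset.orderEmbOfFin hcard
  have hrange : Set.range c = C := by simp [c, Finset.range_orderEmbOfFin]
  -- removing `c j` from the circuit leaves an independent set, enumerated by `c ∘ j.succAbove`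
  have hmem (j : Fin (r + 1)) (i : Fin r) : c (j.succAbove i) ∈ P.N i := by
    have hsub : Set.range (c ∘ j.succAbove) ⊂ C := by
      rw [← hrange]
      refine (Set.ssubset_iff_of_subset (Set.range_comp_subset_range _ _)).2
        ⟨c j, ⟨j, rfl⟩, ?_⟩
      rintro ⟨i, hi⟩
      exact Fin.succAbove_ne j i (c.injective hi)
    exact P.mem_N_of_isPT_range (c.strictMono.comp (Fin.strictMono_succAbove j))
      ((hM.2 _).1 (hC.2.2 _ hsub)).2 i
  refine ⟨c, fun i => ⟨c.strictMono Fin.castSucc_lt_succ, ?_, ?_⟩, hrange⟩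
  · simpa only [Fin.succAbove_last] using hmem (Fin.last r) i
  · simpa only [Fin.succAbove_zero] using hmem 0 i

namespace Connected

variable (hM : IsLPMOf P M) (hconn : Connected M)
include hM hconn

theorem exists_mem_N (h2 : 2 ≤ m + r) {x : ℕ} (hx : x ∈ Set.Icc 1 (m + r)) :
    ∃ i, x ∈ P.N i := by
  obtain ⟨y, hy, hyx⟩ : ∃ y ∈ Set.Icc 1 (m + r), y ≠ x := by
    rcases eq_or_ne x 1 with rfl | hx1
    · exact ⟨2, ⟨by omega, h2⟩, by omega⟩
    · exact ⟨1, ⟨le_rfl, by omega⟩, hx1.symm⟩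
  obtain ⟨C, hC, hxC, hyC⟩ := hconn x (hM.1 ▸ hx) y (hM.1 ▸ hy) hyx.symm
  have hxC' : {x} ⊂ C :=
    (Set.ssubset_iff_of_subset (Set.singleton_subset_iff.2 hxC)).2 ⟨y, hyC, hyx⟩
  obtain ⟨-, f, -, hf⟩ := (hM.2 _).1 (hC.2.2 _ hxC')
  exact ⟨f ⟨x, rfl⟩, hf ⟨x, rfl⟩⟩

/-- Consecutive intervals overlap: otherwise the elements up to `g i` and those after it
would be matched by disjoint sets of intervals, so no circuit could meet both. -/
theorem l_le_g {i j : Fin r} (hij : i.succ = j.castSucc) : P.l j ≤ P.g i := by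
  have hji : j.val = i.val + 1 := by
    rw [Fin.ext_iff, Fin.val_succ, Fin.val_castSucc] at hij; omega
  by_contra! hlt
  obtain ⟨C, hC, hgC, hlC⟩ := hconn (P.g i) (hM.1 ▸ P.N_subset i (P.g_mem_N i))
    (P.l j) (hM.1 ▸ P.N_subset j (P.l_mem_N j)) hlt.ne
  have hpt (D : Set ℕ) (hD : D ⊂ C) : IsPT P.N D := ((hM.2 D).1 (hC.2.2 D hD)).2
  apply hC.2.1
  refine (hM.2 C).2 ⟨hM.1 ▸ hC.1, ?_⟩
  rw [← Set.inter_union_sdiff C (Set.Iic (P.g i))]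
  refine (hpt _ ?_).union (hpt _ ?_) ?_
  · exact (Set.ssubset_iff_of_subset Set.inter_subset_left).2
      ⟨P.l j, hlC, fun h => hlt.not_ge h.2⟩
  · exact (Set.ssubset_iff_of_subset Set.sdiff_subset).2
      ⟨P.g i, hgC, fun h => h.2 Set.self_mem_Iic⟩
  · rintro x ⟨-, hx⟩ y ⟨-, hy⟩ k hxk hyk
    have hkj : k < j := P.l_strictMono.lt_iff_lt.1 (hxk.1.trans_lt (hx.trans_lt hlt))
    have hki : k ≤ i := by rw [Fin.lt_def] at hkj; rw [Fin.le_def]; omega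
    exact hy (hyk.2.trans (P.g_strictMono.monotone hki))

theorem l_lt_g (hm : 1 ≤ m) (i : Fin r) : P.l i < P.g i := by
  by_cases hnext : i.val + 1 < r
  · calc P.l i < P.l ⟨i.val + 1, hnext⟩ := P.l_strictMono (Fin.mk_lt_mk.2 (by simp))
      _ ≤ P.g i := hconn.l_le_g hM (Fin.ext (by simp))
  by_cases hprev : 0 < i.val
  · calc P.l i ≤ P.g ⟨i.val - 1, by omega⟩ := hconn.l_le_g hM (Fin.ext (by simp; omega))
      _ < P.g i := P.g_strictMono (Fin.mk_lt_mk.2 (by omega))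
  have hi (k : Fin r) : k = i := Fin.ext (by omega)
  obtain ⟨k, hk⟩ := hconn.exists_mem_N hM (by omega) (x := 1) ⟨le_rfl, by omega⟩
  obtain ⟨k', hk'⟩ := hconn.exists_mem_N hM (by omega) (x := m + r) ⟨by omega, le_rfl⟩
  rw [hi k] at hk
  rw [hi k'] at hk'
  exact hk.1.trans_lt ((show 1 < m + r by omega).trans_le hk'.2)

end Connected

/-- The chain `l 0 < ⋯ < l (p - 1) < x < g p < ⋯ < g (r - 1)` through `x` at position `p`. -/
theorem exists_isChain_mem_range
    (hover : ∀ i j : Fin r, i.succ = j.castSucc → P.l j ≤ P.g i) {x : ℕ} (p : Fin (r + 1))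
    (hleft : ∀ i : Fin r, i.succ = p → P.l i < x ∧ x ≤ P.g i)
    (hright : ∀ i : Fin r, i.castSucc = p → P.l i ≤ x ∧ x < P.g i) :
    ∃ c, IsChain P c ∧ x ∈ Set.range c := by
  let c : Fin (r + 1) → ℕ := fun k =>
    if h : k < p then P.l (k.castPred (Fin.ne_last_of_lt h))
    else if h' : p < k then P.g (k.pred (Fin.ne_zero_of_lt h')) else x
  have hc_lt {k} (h : k < p) : c k = P.l (k.castPred (Fin.ne_last_of_lt h)) := dif_pos h
  have hc_gt {k} (h : p < k) : c k = P.g (k.pred (Fin.ne_zero_of_lt h)) := by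
    simp only [c, dif_neg h.not_gt, dif_pos h]
  have hc_p : c p = x := by simp only [c, lt_irrefl, dite_false]
  refine ⟨c, fun i => ?_, p, hc_p⟩
  rcases lt_trichotomy i.succ p with h | rfl | h
  · set j := i.succ.castPred (Fin.ne_last_of_lt h)
    have hij : i.succ = j.castSucc := (Fin.castSucc_castPred _ _).symm
    have hlij : P.l i < P.l j :=
      P.l_strictMono (Fin.castSucc_lt_castSucc_iff.1 (hij ▸ Fin.castSucc_lt_succ))
    rw [hc_lt (Fin.castSucc_lt_succ.trans h), hc_lt h, Fin.castPred_castSucc]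
    exact ⟨hlij, P.l_mem_N i, hlij.le, hover i j hij⟩
  · obtain ⟨hl, hg⟩ := hleft i rfl
    rw [hc_lt Fin.castSucc_lt_succ, Fin.castPred_castSucc, hc_p]
    exact ⟨hl, P.l_mem_N i, hl.le, hg⟩
  · have hcs : p ≤ i.castSucc := by rwa [← not_lt, Fin.castSucc_lt_iff_succ_le, not_le]
    rcases hcs.eq_or_lt with rfl | h'
    · obtain ⟨hl, hg⟩ := hright i rfl
      rw [hc_p, hc_gt h, Fin.pred_succ]
      exact ⟨hg, ⟨hl, hg.le⟩, P.g_mem_N i⟩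
    · set k := i.castSucc.pred (Fin.ne_zero_of_lt h')
      have hki : k.succ = i.castSucc := Fin.succ_pred _ _
      have hgki : P.g k < P.g i :=
        P.g_strictMono (Fin.castSucc_lt_castSucc_iff.1 (hki ▸ Fin.castSucc_lt_succ))
      rw [hc_gt h', hc_gt h, Fin.pred_succ]
      exact ⟨hgki, ⟨hover k i hki, hgki.le⟩, P.g_mem_N i⟩

section ChainThrough

variable (hover : ∀ i j : Fin r, i.succ = j.castSucc → P.l j ≤ P.g i) {x : ℕ}
include hover

theorem exists_isChain_of_mem_N_of_mem_N {i j : Fin r} (hij : i ≠ j) (hi : x ∈ P.N i)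
    (hj : x ∈ P.N j) : ∃ c, IsChain P c ∧ x ∈ Set.range c := by
  wlog hlt : i < j generalizing i j
  · exact this hij.symm hj hi (lt_of_le_of_ne (not_lt.1 hlt) hij.symm)
  refine exists_isChain_mem_range hover i.succ (fun i' hi' => ?_) (fun j' hj' => ?_)
  · obtain rfl := Fin.succ_inj.1 hi'
    exact ⟨(P.l_strictMono hlt).trans_le hj.1, hi.2⟩
  · have hj'v : j'.val = i.val + 1 := by simp [Fin.ext_iff] at hj'; omega
    rw [Fin.lt_def] at hlt
    exact ⟨(P.l_strictMono.monotone (Fin.le_def.2 (by omega))).trans hj.1,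
      hi.2.trans_lt (P.g_strictMono (Fin.lt_def.2 (by omega)))⟩

theorem exists_isChain_of_mem_N_zero (hlg : ∀ i, P.l i < P.g i) (hr : 0 < r)
    (hx : x ∈ P.N ⟨0, hr⟩) : ∃ c, IsChain P c ∧ x ∈ Set.range c := by
  rcases hx.2.lt_or_eq with hlt | rfl
  · refine exists_isChain_mem_range hover (Fin.castSucc ⟨0, hr⟩)
      (fun i hi => ?_) (fun i hi => ?_)
    · simp [Fin.ext_iff] at hi
    · obtain rfl := Fin.castSucc_inj.1 hi
      exact ⟨hx.1, hlt⟩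
  · refine exists_isChain_mem_range hover (Fin.succ ⟨0, hr⟩) (fun i hi => ?_) (fun j hj => ?_)
    · obtain rfl := Fin.succ_inj.1 hi
      exact ⟨hlg _, le_rfl⟩
    · have hjv : j.val = 1 := by simp [Fin.ext_iff] at hj; omega
      exact ⟨hover _ j hj.symm, P.g_strictMono (Fin.lt_def.2 (by simp [hjv]))⟩

theorem exists_isChain_of_mem_N_last (hlg : ∀ i, P.l i < P.g i) (hr : 0 < r)
    (hx : x ∈ P.N ⟨r - 1, by omega⟩) : ∃ c, IsChain P c ∧ x ∈ Set.range c := by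
  rcases hx.1.lt_or_eq with hlt | rfl
  · refine exists_isChain_mem_range hover (Fin.succ ⟨r - 1, by omega⟩)
      (fun i hi => ?_) (fun i hi => ?_)
    · obtain rfl := Fin.succ_inj.1 hi
      exact ⟨hlt, hx.2⟩
    · simp [Fin.ext_iff] at hi; omega
  · refine exists_isChain_mem_range hover (Fin.castSucc ⟨r - 1, by omega⟩)
      (fun h hh => ?_) (fun i hi => ?_)
    · have hhv : h.val + 1 = r - 1 := by simp [Fin.ext_iff] at hh; omega
      exact ⟨P.l_strictMono (Fin.lt_def.2 (by simp; omega)), hover h _ hh⟩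
    · obtain rfl := Fin.castSucc_inj.1 hi
      exact ⟨le_rfl, hlg _⟩

end ChainThrough

end LPM

open LPM in
/-- In a connected lattice path matroid `M[N]` (with
`m, r ≥ 1`), an element `x` lies in a spanning circuit iff `x` is in at least
two of the sets `N 1, …, N r`, or `x ∈ N 1`, or `x ∈ N r`. -/
theorem stmt9 {m r : ℕ} (hm : 1 ≤ m) (hr : 1 ≤ r) (P : LPP m r)
    (M : Matroid ℕ) (hM : IsLPMOf P M) (hconn : Connected M)
    (x : ℕ) :
    (∃ C : Set ℕ, Circuit M C ∧ rk M C = rk M M.E ∧ x ∈ C) ↔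
      ((∃ i j : Fin r, i ≠ j ∧ x ∈ P.N i ∧ x ∈ P.N j) ∨
        x ∈ P.N ⟨0, by omega⟩ ∨ x ∈ P.N ⟨r - 1, by omega⟩) := by
  have hover (i j : Fin r) (hij : i.succ = j.castSucc) : P.l j ≤ P.g i := hconn.l_le_g hM hij
  have hlg := hconn.l_lt_g hM hm
  constructor
  · rintro ⟨C, hC, hCr, hxC⟩
    obtain ⟨c, hc, rfl⟩ := hM.exists_isChain_of_circuit hC (hCr.trans hM.rk_ground)
    obtain ⟨k, rfl⟩ := hxC
    exact hc.mem_N_two_or_mem_N_ends hr k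
  · intro h
    obtain ⟨c, hc, hxc⟩ : ∃ c, IsChain P c ∧ x ∈ Set.range c := by
      rcases h with ⟨i, j, hij, hi, hj⟩ | h0 | hlast
      · exact exists_isChain_of_mem_N_of_mem_N hover hij hi hj
      · exact exists_isChain_of_mem_N_zero hover hlg hr h0
      · exact exists_isChain_of_mem_N_last hover hlg hr hlast
    exact ⟨_, hc.circuit hM hr, by rw [hc.rk_range hM, hM.rk_ground], hxc⟩
end
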